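/- The function H(y) = (1/√(exp(2y²) − 1))·∫_0^y exp(u²) du is strictly decreasing on (0, ∞), and H(y) → 1/√2 as y → 0⁺. -/

import Mathlib

/-!
Write `F y = ∫₀^y e^{u²} du` and `D y = e^{2y²} - 1 = 2 e^{y²} sinh (y²)`, so that `H = F / √D`.
The quotient is strictly decreasing as soon as `F' √D < F (√D)'`, which after clearing
denominators is `sinh (y²) < y F y`. That inequality holds because `y F y - sinh (y²)` vanishes
at `0` and has derivative `F y - y e^{-y²} > 0`, since `F y ≥ y`. Near `0`, `F y / y → F' 0 = 1`
and `D y / y² → 2`, so `H y = (F y / y) / √(D y / y²) → 1 / √2`.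
-/

open Real Filter Topology Set

theorem strictAntiOn_div_of_hasDerivAt {f g f' g' : ℝ → ℝ} {s : Set ℝ} (hs : Convex ℝ s)
    (hf : ∀ x ∈ s, HasDerivAt f (f' x) x) (hg : ∀ x ∈ s, HasDerivAt g (g' x) x)
    (hg_pos : ∀ x ∈ s, 0 < g x) (hfg : ∀ x ∈ s, f' x * g x < f x * g' x) :
    StrictAntiOn (fun x => f x / g x) s := by
  have hdiv : ∀ x ∈ s, HasDerivAt (fun x => f x / g x)
      ((f' x * g x - f x * g' x) / g x ^ 2) x :=
    fun x hx => (hf x hx).div (hg x hx) (hg_pos x hx).ne'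
  refine strictAntiOn_of_deriv_neg hs (fun x hx => (hdiv x hx).continuousAt.continuousWithinAt)
    fun x hx => ?_
  have hx := interior_subset hx
  rw [(hdiv x hx).deriv]
  exact div_neg_of_neg_of_pos (sub_neg.2 (hfg x hx)) (pow_pos (hg_pos x hx) 2)

theorem exp_two_mul_sub_one (x : ℝ) : exp (2 * x) - 1 = 2 * exp x * sinh x := by
  rw [sinh_eq, two_mul, exp_add, exp_neg]
  field_simp

noncomputable def expSqIntegral (y : ℝ) : ℝ := ∫ u in (0 : ℝ)..y, exp (u ^ 2)

@[simp]
theorem expSqIntegral_zero : expSqIntegral 0 = 0 := intervalIntegral.integral_same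

theorem hasDerivAt_expSqIntegral (y : ℝ) : HasDerivAt expSqIntegral (exp (y ^ 2)) y :=
  ((continuous_pow 2).rexp.integral_hasStrictDerivAt 0 y).hasDerivAt

theorem le_expSqIntegral {y : ℝ} (hy : 0 ≤ y) : y ≤ expSqIntegral y := by
  have h := intervalIntegral.integral_mono_on hy
    (intervalIntegrable_const (μ := MeasureTheory.volume))
    ((continuous_pow 2).rexp.intervalIntegrable 0 y) fun u _ => one_le_exp (sq_nonneg u)
  simpa [expSqIntegral] using h

theorem sinh_sq_lt_mul_expSqIntegral {y : ℝ} (hy : 0 < y) :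
    sinh (y ^ 2) < y * expSqIntegral y := by
  set ψ : ℝ → ℝ := fun x => x * expSqIntegral x - sinh (x ^ 2)
  have hψ : ∀ x, HasDerivAt ψ (expSqIntegral x - x * exp (-x ^ 2)) x := by
    intro x
    have h : HasDerivAt ψ (1 * expSqIntegral x + x * exp (x ^ 2) - cosh (x ^ 2) * (2 * x)) x :=
      ((hasDerivAt_id' x).mul (hasDerivAt_expSqIntegral x)).sub
        (by simpa using (hasDerivAt_pow 2 x).sinh)
    refine h.congr_deriv ?_
    rw [cosh_eq]
    ring
  have hmono : StrictMonoOn ψ (Ici 0) := by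
    refine strictMonoOn_of_deriv_pos (convex_Ici 0)
      (fun x _ => (hψ x).continuousAt.continuousWithinAt) fun x hx => ?_
    rw [interior_Ici] at hx
    have hx : 0 < x := hx
    have hexp : exp (-x ^ 2) < 1 := exp_lt_one_iff.2 (by nlinarith)
    rw [(hψ x).deriv]
    nlinarith [le_expSqIntegral hx.le]
  simpa [ψ] using hmono self_mem_Ici hy.le hy

noncomputable def expSqRatio (y : ℝ) : ℝ := expSqIntegral y / √(exp (2 * y ^ 2) - 1)

theorem exp_two_mul_sq_sub_one_pos {y : ℝ} (hy : y ≠ 0) : 0 < exp (2 * y ^ 2) - 1 :=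
  sub_pos.2 (one_lt_exp_iff.2 (by positivity))

theorem strictAntiOn_expSqRatio : StrictAntiOn expSqRatio (Ioi 0) := by
  have hD : ∀ y : ℝ, HasDerivAt (fun y => exp (2 * y ^ 2) - 1) (exp (2 * y ^ 2) * (4 * y)) y :=
    fun y => ((((hasDerivAt_pow 2 y).const_mul 2).exp).sub_const 1).congr_deriv
      (by norm_num; ring)
  refine strictAntiOn_div_of_hasDerivAt (convex_Ioi 0) (fun y _ => hasDerivAt_expSqIntegral y)
    (fun y hy => (hD y).sqrt (exp_two_mul_sq_sub_one_pos (ne_of_gt hy)).ne')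
    (fun y hy => sqrt_pos.2 (exp_two_mul_sq_sub_one_pos (ne_of_gt hy))) fun y hy => ?_
  have hy : 0 < y := hy
  have hDpos := exp_two_mul_sq_sub_one_pos hy.ne'
  have hsqrt : √(exp (2 * y ^ 2) - 1) * √(exp (2 * y ^ 2) - 1) =
      2 * exp (y ^ 2) * sinh (y ^ 2) := by
    rw [mul_self_sqrt hDpos.le, exp_two_mul_sub_one]
  have hexp : exp (2 * y ^ 2) = exp (y ^ 2) * exp (y ^ 2) := by rw [← exp_add, two_mul]
  rw [mul_div_assoc', lt_div_iff₀ (by positivity)]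
  calc exp (y ^ 2) * √(exp (2 * y ^ 2) - 1) * (2 * √(exp (2 * y ^ 2) - 1))
      = 4 * exp (y ^ 2) ^ 2 * sinh (y ^ 2) := by linear_combination 2 * exp (y ^ 2) * hsqrt
    _ < 4 * exp (y ^ 2) ^ 2 * (y * expSqIntegral y) := by
        gcongr; exact sinh_sq_lt_mul_expSqIntegral hy
    _ = expSqIntegral y * (exp (2 * y ^ 2) * (4 * y)) := by rw [hexp]; ring

theorem tendsto_expSqIntegral_div_self :
    Tendsto (fun y => expSqIntegral y / y) (𝓝[>] 0) (𝓝 1) := by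
  simpa [div_eq_inv_mul] using (hasDerivAt_expSqIntegral 0).tendsto_slope_zero_right

theorem tendsto_exp_two_mul_sq_sub_one_div_sq :
    Tendsto (fun y => (exp (2 * y ^ 2) - 1) / y ^ 2) (𝓝[>] 0) (𝓝 2) := by
  have hexp : Tendsto (fun t => (exp (2 * t) - 1) / t) (𝓝[>] 0) (𝓝 2) := by
    have h : HasDerivAt (fun t => exp (2 * t)) 2 0 := by
      simpa using ((hasDerivAt_id 0).const_mul 2).exp
    simpa [div_eq_inv_mul] using h.tendsto_slope_zero_right
  have hsq : Tendsto (fun y : ℝ => y ^ 2) (𝓝[>] 0) (𝓝[>] 0) :=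
    tendsto_nhdsWithin_iff.2
      ⟨((continuous_pow 2).tendsto' 0 0 (by norm_num)).mono_left nhdsWithin_le_nhds,
        eventually_mem_nhdsWithin.mono fun y (hy : 0 < y) => pow_pos hy 2⟩
  exact hexp.comp hsq

theorem tendsto_expSqRatio : Tendsto expSqRatio (𝓝[>] 0) (𝓝 (1 / √2)) := by
  have h := tendsto_expSqIntegral_div_self.div tendsto_exp_two_mul_sq_sub_one_div_sq.sqrt
    (by positivity)
  refine h.congr' (eventually_mem_nhdsWithin.mono fun y (hy : 0 < y) => ?_)
  rw [Pi.div_apply, expSqRatio, sqrt_div' _ (sq_nonneg y), sqrt_sq hy.le,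
    div_div_div_cancel_right₀ hy.ne']

/-- The function `H(y) = (e^{2y²} - 1)^{-1/2} ∫_0^y e^{u²} du` is strictly decreasing
on `(0, ∞)` and tends to `1/√2` as `y → 0⁺`. -/
theorem H_strictly_decreasing
    (H : ℝ → ℝ)
    (hH : ∀ y, H y = 1 / Real.sqrt (Real.exp (2 * y ^ 2) - 1) *
      ∫ u in (0:ℝ)..y, Real.exp (u ^ 2)) :
    StrictAntiOn H (Set.Ioi 0) ∧
    Filter.Tendsto H (nhdsWithin 0 (Set.Ioi 0)) (nhds (1 / Real.sqrt 2)) := by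
  obtain rfl : H = expSqRatio := funext fun y => by rw [hH, one_div_mul_eq_div]; rfl
  exact ⟨strictAntiOn_expSqRatio, tendsto_expSqRatio⟩
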